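/- arXiv:1003.1589 — 3 statements merged into one kernel-verified Lean document; each statement's English description precedes it below -/
import Mathlib

section
/- Removable singularity with positive real part: if f is holomorphic on the punctured unit disc {z ∈ ℂ : 0 < |z| < 1} and Re f(z) ≥ 0 for every z in the punctured disc, then f extends to a holomorphic function on the whole unit disc {z ∈ ℂ : |z| < 1}. -/
/-!
The Cayley transform `w ↦ (w - 1) / (w + 1)` maps the closed right half-plane into the closed
unit disc and never takes the value `1`. Composed with `f` it gives a bounded holomorphic function
on the punctured disc, which extends across `0` by Riemann's theorem. The extension cannot take
the value `1` at `0` either, since `‖1‖ = 1` would then be an interior maximum of its modulus and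
force it to be constant. Inverting the Cayley transform on the extension extends `f`.
-/

open Complex Metric Set Function Filter Topology

noncomputable def cayley (w : ℂ) : ℂ := (w - 1) / (w + 1)

lemma add_one_ne_zero_of_nonneg_re {w : ℂ} (hw : 0 ≤ w.re) : w + 1 ≠ 0 := by
  intro h
  have := congrArg Complex.re h
  simp only [add_re, one_re, zero_re] at this
  linarith

lemma norm_cayley_le_one {w : ℂ} (hw : 0 ≤ w.re) : ‖cayley w‖ ≤ 1 := by
  rw [cayley, norm_div, div_le_one (norm_pos_iff.mpr (add_one_ne_zero_of_nonneg_re hw)),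
    norm_def, norm_def]
  apply Real.sqrt_le_sqrt
  simp only [normSq_apply, sub_re, sub_im, add_re, add_im, one_re, one_im]
  nlinarith

lemma cayley_ne_one (w : ℂ) : cayley w ≠ 1 := by
  rcases eq_or_ne (w + 1) 0 with hw | hw
  · simp [cayley, hw] -- `cayley (-1) = 0` since `x / 0 = 0`
  · rw [cayley, Ne, div_eq_one_iff_eq hw]
    intro h
    have : (-1 : ℂ) = 1 := by linear_combination h
    norm_num at this

lemma one_add_cayley_div_one_sub_cayley {w : ℂ} (hw : w + 1 ≠ 0) :
    (1 + cayley w) / (1 - cayley w) = w := by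
  rw [cayley]
  field_simp
  ring

lemma apply_ne_of_norm_le_of_ne_off_point {G : ℂ → ℂ} {U : Set ℂ} {c u : ℂ}
    (hU : IsPreconnected U) (hUo : IsOpen U) (hcU : c ∈ U) (hG : DifferentiableOn ℂ G U)
    (hle : ∀ z ∈ U \ {c}, ‖G z‖ ≤ ‖u‖) (hne : ∀ z ∈ U \ {c}, G z ≠ u) : G c ≠ u := by
  intro hc
  have hmax : IsMaxOn (norm ∘ G) U c := isMaxOn_iff.2 fun z hz => by
    rcases eq_or_ne z c with rfl | hzc
    · exact le_rfl
    · simpa [hc] using hle z ⟨hz, hzc⟩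
  have hconst := eqOn_of_isPreconnected_of_isMaxOn_norm hU hUo hG hcU hmax
  obtain ⟨z, hzU, hzc⟩ :=
    ((eventually_nhdsWithin_of_eventually_nhds (hUo.mem_nhds hcU)).and
      self_mem_nhdsWithin).exists (f := 𝓝[≠] c)
  exact hne z ⟨hzU, hzc⟩ (by rw [hconst hzU, const_apply, hc])

lemma exists_differentiableOn_eqOn_of_bddAbove {g : ℂ → ℂ} {s : Set ℂ} {c : ℂ} (hs : s ∈ 𝓝 c)
    (hg : DifferentiableOn ℂ g (s \ {c})) (hb : BddAbove (norm ∘ g '' (s \ {c}))) :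
    ∃ G : ℂ → ℂ, DifferentiableOn ℂ G s ∧ EqOn G g (s \ {c}) :=
  ⟨_, differentiableOn_update_limUnder_of_bddAbove hs hg hb,
    fun _ hz => update_of_ne hz.2 _ _⟩

lemma punctured_unit_disc_eq : {z : ℂ | 0 < ‖z‖ ∧ ‖z‖ < 1} = ball 0 1 \ {0} := by
  ext z
  simp [and_comm]

lemma unit_disc_eq : {z : ℂ | ‖z‖ < 1} = ball 0 1 := by
  ext z
  simp

/-- Removable singularity with positive real part: a holomorphic function on the
punctured unit disc with nonnegative real part extends holomorphically to the
whole unit disc. -/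
theorem removable_singularity_of_nonneg_re (f : ℂ → ℂ)
    (hf : DifferentiableOn ℂ f {z : ℂ | 0 < ‖z‖ ∧ ‖z‖ < 1})
    (hre : ∀ z ∈ {z : ℂ | 0 < ‖z‖ ∧ ‖z‖ < 1}, 0 ≤ (f z).re) :
    ∃ g : ℂ → ℂ, DifferentiableOn ℂ g {z : ℂ | ‖z‖ < 1} ∧
      Set.EqOn g f {z : ℂ | 0 < ‖z‖ ∧ ‖z‖ < 1} := by
  rw [punctured_unit_disc_eq] at hf hre ⊢
  rw [unit_disc_eq]
  have hcf : DifferentiableOn ℂ (cayley ∘ f) (ball 0 1 \ {0}) :=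
    (hf.sub_const 1).div (hf.add_const 1) fun z hz => add_one_ne_zero_of_nonneg_re (hre z hz)
  have hle : ∀ z ∈ ball (0 : ℂ) 1 \ {0}, ‖cayley (f z)‖ ≤ ‖(1 : ℂ)‖ := fun z hz => by
    simpa using norm_cayley_le_one (hre z hz)
  obtain ⟨G, hG, hGf⟩ := exists_differentiableOn_eqOn_of_bddAbove (ball_mem_nhds 0 one_pos) hcf
    ⟨‖(1 : ℂ)‖, by rintro _ ⟨z, hz, rfl⟩; exact hle z hz⟩
  have hG1 : ∀ z ∈ ball (0 : ℂ) 1, 1 - G z ≠ 0 := by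
    intro z hz
    rw [sub_ne_zero, ne_comm]
    rcases eq_or_ne z 0 with rfl | hz0
    · exact apply_ne_of_norm_le_of_ne_off_point (convex_ball 0 1).isPreconnected isOpen_ball hz
        hG (fun w hw => hGf hw ▸ hle w hw) fun w hw => hGf hw ▸ cayley_ne_one (f w)
    · exact hGf ⟨hz, hz0⟩ ▸ cayley_ne_one (f z)
  refine ⟨fun z => (1 + G z) / (1 - G z), (hG.const_add 1).div (hG.const_sub 1) hG1, ?_⟩
  intro z hz
  simp only [hGf hz, comp_apply,
    one_add_cayley_div_one_sub_cayley (add_one_ne_zero_of_nonneg_re (hre z hz))]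
end

section
/- Flatness is preserved under exponential reparametrization: let δ > 0 and let d : ℝ → ℝ be continuous on [0, δ) with d(0) = 0 and 0 < d(t) < 1 for all t ∈ (0, δ), and suppose that for every natural number k, (d(t) − t)/t^k → 0 as t → 0 from the right. Define θ(t) = e^{−1/t} for t > 0, so that θ⁻¹(s) = −1/log(s) for 0 < s < 1. Then the conjugated map g(t) = −1/log(d(e^{−1/t})), defined for all sufficiently small t > 0, again has infinite order of contact with the identity at 0: for every natural number k, (g(t) − t)/t^k → 0 as t → 0 from the right. -/
/-!
With `θ t = exp (-1/t)` and `ℓ t = log (d (θ t) / θ t)`, we have `log (d (θ t)) = ℓ t - 1/t`, so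
the conjugated map is `g t = t / (1 - t ℓ t)` and `g t - t = ℓ t * t² / (1 - t ℓ t)`.
Flatness of `d - id` makes `log (d s / s) = O((d s - s) / s)` flat at `0`; composing with the flat
map `θ` keeps `ℓ` flat, and the factor `t² / (1 - t ℓ t)` is bounded.
-/

open Filter Real Topology Asymptotics

def FlatAtZero (f : ℝ → ℝ) : Prop :=
  ∀ k : ℕ, f =o[𝓝[>] 0] (· ^ k)

theorem flatAtZero_iff_tendsto_div_pow {f : ℝ → ℝ} :
    FlatAtZero f ↔ ∀ k : ℕ, Tendsto (fun t => f t / t ^ k) (𝓝[>] 0) (𝓝 0) := by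
  refine forall_congr' fun k => isLittleO_iff_tendsto' ?_
  filter_upwards [self_mem_nhdsWithin] with t (ht : 0 < t) htk
  exact absurd htk (pow_pos ht k).ne'

namespace FlatAtZero

variable {f g : ℝ → ℝ}

theorem congr' (hf : FlatAtZero f) (hfg : f =ᶠ[𝓝[>] 0] g) : FlatAtZero g :=
  fun k => (hf k).congr' hfg EventuallyEq.rfl

theorem tendsto_zero (hf : FlatAtZero f) : Tendsto f (𝓝[>] 0) (𝓝 0) := by
  simpa using flatAtZero_iff_tendsto_div_pow.1 hf 0

theorem div_id (hf : FlatAtZero f) : FlatAtZero fun t => f t / t := by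
  rw [flatAtZero_iff_tendsto_div_pow] at hf ⊢
  refine fun k => (hf (k + 1)).congr fun t => ?_
  rw [div_div, pow_succ']

theorem mul_isBigO_one (hf : FlatAtZero f) (hg : g =O[𝓝[>] 0] fun _ => (1 : ℝ)) :
    FlatAtZero fun t => f t * g t :=
  fun k => by simpa using (hf k).mul_isBigO hg

theorem comp (hf : FlatAtZero f) (hg : FlatAtZero g) (hg0 : Tendsto g (𝓝[>] 0) (𝓝[>] 0)) :
    FlatAtZero (f ∘ g) :=
  fun k => by
    have hfg := (hf 1).comp_tendsto hg0
    simp only [Function.comp_def, pow_one] at hfg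
    exact hfg.trans_isBigO (hg k).isBigO

theorem log_div_id {d : ℝ → ℝ} (hd : FlatAtZero fun s => d s - s) :
    FlatAtZero fun s => log (d s / s) := by
  have hq : FlatAtZero fun s => (d s - s) / s := hd.div_id
  have hratio : ∀ᶠ s in 𝓝[>] 0, (d s - s) / s + 1 = d s / s := by
    filter_upwards [self_mem_nhdsWithin] with s (hs : 0 < s)
    field_simp
    ring
  have hto1 : Tendsto (fun s => d s / s) (𝓝[>] 0) (𝓝 1) := by
    simpa using (hq.tendsto_zero.add_const 1).congr' hratio
  have hlog : (fun s => log (d s / s)) =O[𝓝[>] 0] fun s => d s / s - 1 := by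
    simpa [Function.comp_def] using (hasDerivAt_log one_ne_zero).isBigO_sub.comp_tendsto hto1
  have hsub : (fun s => d s / s - 1) =ᶠ[𝓝[>] 0] fun s => (d s - s) / s :=
    hratio.mono fun s hs => by simp only [← hs]; ring
  exact fun k => (hlog.congr' EventuallyEq.rfl hsub).trans_isLittleO (hq k)

end FlatAtZero

theorem flatAtZero_exp_neg_inv : FlatAtZero fun t => exp (-1 / t) := by
  rw [flatAtZero_iff_tendsto_div_pow]
  refine fun k => ((tendsto_pow_mul_exp_neg_atTop_nhds_zero k).comp
    tendsto_inv_nhdsGT_zero).congr fun t => ?_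
  simp [div_eq_mul_inv, mul_comm]

theorem tendsto_exp_neg_inv_nhdsGT_zero :
    Tendsto (fun t => exp (-1 / t)) (𝓝[>] 0) (𝓝[>] 0) := by
  refine tendsto_nhdsWithin_iff.2 ⟨flatAtZero_exp_neg_inv.tendsto_zero, ?_⟩
  exact Eventually.of_forall fun t => exp_pos _

theorem neg_one_div_sub_one_div_sub_self {t ℓ : ℝ} (ht : t ≠ 0) (hℓ : ℓ - 1 / t ≠ 0) :
    -1 / (ℓ - 1 / t) - t = ℓ * (t ^ 2 / (1 - t * ℓ)) := by
  have hsub : ℓ - 1 / t = -(1 - t * ℓ) / t := by field_simp; ring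
  have h : 1 - t * ℓ ≠ 0 := fun h => hℓ (by rw [hsub, h]; simp)
  rw [hsub]
  field_simp
  ring

theorem flatness_preserved_under_exponential_reparametrization_general
    (δ : ℝ) (hδ : 0 < δ) (d : ℝ → ℝ)
    (hrange : ∀ t ∈ Set.Ioo 0 δ, 0 < d t ∧ d t < 1)
    (hflat : ∀ k : ℕ, Tendsto (fun t => (d t - t) / t ^ k)
      (nhdsWithin 0 (Set.Ioi 0)) (nhds 0)) :
    ∀ k : ℕ, Tendsto
      (fun t => (-1 / Real.log (d (Real.exp (-1 / t))) - t) / t ^ k)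
      (nhdsWithin 0 (Set.Ioi 0)) (nhds 0) := by
  set θ : ℝ → ℝ := fun t => exp (-1 / t)
  set ℓ : ℝ → ℝ := fun t => log (d (θ t) / θ t)
  have hθ : Tendsto θ (𝓝[>] 0) (𝓝[>] 0) := tendsto_exp_neg_inv_nhdsGT_zero
  have hℓ : FlatAtZero ℓ :=
    (flatAtZero_iff_tendsto_div_pow.2 hflat).log_div_id.comp flatAtZero_exp_neg_inv hθ
  have hbounded : (fun t => t ^ 2 / (1 - t * ℓ t)) =O[𝓝[>] 0] fun _ => (1 : ℝ) := by
    have ht : Tendsto (fun t : ℝ => t) (𝓝[>] 0) (𝓝 0) := nhdsWithin_le_nhds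
    have hden : Tendsto (fun t => 1 - t * ℓ t) (𝓝[>] 0) (𝓝 1) := by
      simpa using tendsto_const_nhds.sub (ht.mul hℓ.tendsto_zero)
    exact ((ht.pow 2).div hden one_ne_zero).isBigO_one ℝ
  refine flatAtZero_iff_tendsto_div_pow.1 ((hℓ.mul_isBigO_one hbounded).congr' ?_)
  filter_upwards [self_mem_nhdsWithin, hθ.eventually (Ioo_mem_nhdsGT hδ)] with t (ht : 0 < t) hθt
  have hlog : log (d (θ t)) = ℓ t - 1 / t := by
    simp only [ℓ, log_div (hrange _ hθt).1.ne' (exp_pos _).ne', θ, log_exp]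
    ring
  have hneg : log (d (θ t)) < 0 := log_neg (hrange _ hθt).1 (hrange _ hθt).2
  rw [hlog] at hneg ⊢
  exact (neg_one_div_sub_one_div_sub_self ht.ne' hneg.ne).symm

/-- Flatness is preserved under the exponential reparametrization `θ t = e^{-1/t}`:
if `d` is continuous on `[0, δ)` with `d 0 = 0`, `0 < d t < 1` on `(0, δ)`, and
`d t - t = o(t^k)` as `t → 0⁺` for every `k`, then the conjugated map
`g t = -1 / log (d (exp (-1/t)))` again satisfies `g t - t = o(t^k)` as `t → 0⁺`
for every `k`. -/
theorem flatness_preserved_under_exponential_reparametrization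
    (δ : ℝ) (hδ : 0 < δ) (d : ℝ → ℝ)
    (hcont : ContinuousOn d (Set.Ico 0 δ)) (h0 : d 0 = 0)
    (hrange : ∀ t ∈ Set.Ioo 0 δ, 0 < d t ∧ d t < 1)
    (hflat : ∀ k : ℕ, Tendsto (fun t => (d t - t) / t ^ k)
      (nhdsWithin 0 (Set.Ioi 0)) (nhds 0)) :
    ∀ k : ℕ, Tendsto
      (fun t => (-1 / Real.log (d (Real.exp (-1 / t))) - t) / t ^ k)
      (nhdsWithin 0 (Set.Ioi 0)) (nhds 0) :=
  flatness_preserved_under_exponential_reparametrization_general δ hδ d hrange hflat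
end

section
/- The Hopf covering transformation is contracting: fix α, β, λ ∈ ℂ and m ∈ ℕ with 0 < |α| ≤ |β| < 1 and (β^m − α)λ = 0, and define H : ℂ² → ℂ² by H(z, w) = (αz + λw^m, βw). Then for every point p ∈ ℂ², the iterates H^[n](p) converge to (0,0) as n → ∞. -/
/-!
The second coordinate of `H^[n] (z, w)` is `βⁿ w`. Because `λβ^m = λα`, the term
`λ (βⁿ w)^m` equals `λ αⁿ w^m`, so the first coordinate of `H^[n+1] (z, w)` is
`α^(n+1) z + (n + 1) αⁿ λ w^m`, which tends to `0` since `|α| ≤ |β| < 1` and geometric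
decay beats linear growth.
-/

open Filter Topology

theorem tendsto_natCast_mul_pow_of_norm_lt_one {R : Type*} [NormedRing R] {x : R}
    (hx : ‖x‖ < 1) : Tendsto (fun n : ℕ ↦ (n : R) * x ^ n) atTop (𝓝 0) := by
  obtain ⟨r, hxr, hr⟩ := exists_between hx
  simpa using (isLittleO_pow_const_mul_const_pow_const_pow_of_norm_lt 1 hxr).trans_tendsto
    (tendsto_pow_atTop_nhds_zero_of_lt_one ((norm_nonneg x).trans hxr.le) hr)

theorem tendsto_natCast_add_one_mul_pow_of_norm_lt_one {R : Type*} [NormedRing R] {x : R}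
    (hx : ‖x‖ < 1) : Tendsto (fun n : ℕ ↦ ((n : R) + 1) * x ^ n) atTop (𝓝 0) := by
  simpa [add_mul] using (tendsto_natCast_mul_pow_of_norm_lt_one hx).add
    (tendsto_pow_atTop_nhds_zero_of_norm_lt_one hx)

theorem mul_pow_eq_mul_pow_of_mul_eq_mul {M : Type*} [CommMonoid M] {c x y : M}
    (h : c * x = c * y) (n : ℕ) : c * x ^ n = c * y ^ n := by
  induction n with
  | zero => simp
  | succ n ih =>
    calc c * x ^ (n + 1) = c * x ^ n * x := by rw [pow_succ, mul_assoc]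
      _ = y ^ n * (c * x) := by rw [ih, mul_right_comm, mul_comm]
      _ = c * y ^ (n + 1) := by rw [h, pow_succ, mul_left_comm]

def hopfMap {R : Type*} [CommRing R] (α β l : R) (m : ℕ) (p : R × R) : R × R :=
  (α * p.1 + l * p.2 ^ m, β * p.2)

theorem hopfMap_iterate_succ {R : Type*} [CommRing R] {α β l : R} {m : ℕ}
    (h : l * β ^ m = l * α) (p : R × R) (n : ℕ) :
    (hopfMap α β l m)^[n + 1] p =
      (α ^ (n + 1) * p.1 + ((n : R) + 1) * α ^ n * (l * p.2 ^ m), β ^ (n + 1) * p.2) := by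
  induction n with
  | zero => simp [hopfMap]
  | succ n ih =>
    have resonance : l * (β ^ (n + 1) * p.2) ^ m = α ^ (n + 1) * (l * p.2 ^ m) := by
      rw [mul_pow, ← pow_mul, mul_comm (n + 1), pow_mul, ← mul_assoc,
        mul_pow_eq_mul_pow_of_mul_eq_mul h]
      ring
    rw [Function.iterate_succ_apply', ih, hopfMap, resonance]
    push_cast
    ext <;> ring

theorem hopf_map_contracting_general (α β l : ℂ) (m : ℕ)
    (hαβ : ‖α‖ ≤ ‖β‖)
    (hβ : ‖β‖ < 1) (hrel : (β ^ m - α) * l = 0)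
    (H : ℂ × ℂ → ℂ × ℂ) (hH : ∀ p : ℂ × ℂ, H p = (α * p.1 + l * p.2 ^ m, β * p.2)) :
    ∀ p : ℂ × ℂ, Tendsto (fun n => H^[n] p) atTop (nhds (0, 0)) := by
  intro p
  have hα : ‖α‖ < 1 := hαβ.trans_lt hβ
  obtain rfl : H = hopfMap α β l m := funext hH
  rw [← tendsto_add_atTop_iff_nat 1]
  simp_rw [hopfMap_iterate_succ (by linear_combination hrel : l * β ^ m = l * α) p]
  have hαpow := (tendsto_add_atTop_iff_nat 1).2 (tendsto_pow_atTop_nhds_zero_of_norm_lt_one hα)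
  have hβpow := (tendsto_add_atTop_iff_nat 1).2 (tendsto_pow_atTop_nhds_zero_of_norm_lt_one hβ)
  refine Tendsto.prodMk_nhds ?_ (by simpa using hβpow.mul_const p.2)
  simpa using (hαpow.mul_const p.1).add
    ((tendsto_natCast_add_one_mul_pow_of_norm_lt_one hα).mul_const (l * p.2 ^ m))

/-- The Hopf covering transformation `H(z, w) = (αz + λw^m, βw)` is contracting:
the iterates of every point converge to the origin. -/
theorem hopf_map_contracting (α β l : ℂ) (m : ℕ)
    (hα : 0 < ‖α‖) (hαβ : ‖α‖ ≤ ‖β‖)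
    (hβ : ‖β‖ < 1) (hrel : (β ^ m - α) * l = 0)
    (H : ℂ × ℂ → ℂ × ℂ) (hH : ∀ p : ℂ × ℂ, H p = (α * p.1 + l * p.2 ^ m, β * p.2)) :
    ∀ p : ℂ × ℂ, Tendsto (fun n => H^[n] p) atTop (nhds (0, 0)) :=
  hopf_map_contracting_general α β l m hαβ hβ hrel H hH
end
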